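/- arXiv:1312.1277 — 8 statements merged into one kernel-verified Lean document; each statement's English description precedes it below -/
import Mathlib

section
/- Let Z₁, …, Z_n be i.i.d. random variables with values in [0,1], let Z be their average and ζ = E[Z]. For α > 0 define r(α, x) = α/n + sqrt(α·x/n). Then with probability at least 1 − (2^{−α} + 2·e^{−α/72}), both |Z − ζ| < r(α, Z) and r(α, Z) < 3·r(α, ζ) hold. -/
/-!
Write `S = ∑ Zᵢ = n Z` and `m = E S = n ζ`; multiplying both inequalities by `n` turns them into
`|S - m| < α + √(α S)` and `α + √(α S) < 3 (α + √(α m))`. Since `Zᵢ ∈ [0,1]`, convexity of `exp`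
bounds the moment generating function of `S` by `exp (m (eᵗ - 1))`, which gives Chernoff tails.
If `m ≤ α/6`, both inequalities hold as soon as `S < α`, and the tail at `t = 2` gives
`P (S ≥ α) ≤ 2^{-α}`. If `m ≥ α/6`, they hold as soon as `|S - m| < δ m` with `δ² m = α/18`, and the
two tails at `t = ±δ/2` are each at most `exp (-α/72)`.
-/

open MeasureTheory ProbabilityTheory Real

lemma Real.exp_mul_le_one_add_mul_exp_sub_one {x : ℝ} (hx₀ : 0 ≤ x) (hx₁ : x ≤ 1) (t : ℝ) :
    exp (t * x) ≤ 1 + x * (exp t - 1) := by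
  have h := convexOn_exp.2 (Set.mem_univ 0) (Set.mem_univ t) (sub_nonneg.2 hx₁) hx₀
    (sub_add_cancel 1 x)
  simp only [smul_eq_mul, mul_zero, zero_add, exp_zero] at h
  rw [mul_comm t x]
  linarith

lemma chernoff_exponent_le {t m : ℝ} (ht : |t| ≤ 1) (hm : 0 ≤ m) (u : ℝ) :
    -t * (m + u) + m * (exp t - 1) ≤ -t * u + m * t ^ 2 := by
  have h := (abs_le.1 (abs_exp_sub_one_sub_id_le ht)).2
  nlinarith [mul_le_mul_of_nonneg_left h hm]

lemma chernoff_exponent_le_neg_log_two_mul {α m : ℝ} (hm₀ : 0 ≤ m) (hm : 6 * m ≤ α) :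
    -2 * α + m * (exp 2 - 1) ≤ -(log 2 * α) := by
  have he : exp 2 < 7.3891 := by
    rw [show (2 : ℝ) = 1 + 1 by norm_num, exp_add]
    nlinarith [exp_one_lt_d9, exp_pos 1]
  have hl : log 2 < 0.6931471808 := log_two_lt_d9
  nlinarith

def ConfidenceBounds (α m s : ℝ) : Prop :=
  |s - m| < α + √(α * s) ∧ α + √(α * s) < 3 * (α + √(α * m))

lemma confidenceBounds_of_lt {α m s : ℝ} (hs₀ : 0 ≤ s) (hs : s < α) (hm₀ : 0 ≤ m)
    (hm : m < α) : ConfidenceBounds α m s := by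
  have hα : 0 < α := hs₀.trans_lt hs
  have hsqrt : √(α * s) ≤ α := (sqrt_le_left hα.le).2 (by nlinarith)
  refine ⟨?_, ?_⟩
  · rw [abs_sub_lt_iff]
    constructor <;> linarith [sqrt_nonneg (α * s)]
  · linarith [sqrt_nonneg (α * m)]

lemma confidenceBounds_of_abs_sub_lt {α m s δ : ℝ} (hα : 0 < α) (hm₀ : 0 ≤ m)
    (hδ : δ ≤ 3 / 5) (hδm : δ ^ 2 * m ≤ α / 4) (h : |s - m| < δ * m) :
    ConfidenceBounds α m s := by
  obtain ⟨hlow, hhigh⟩ := abs_sub_lt_iff.1 h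
  have hδm₀ : 0 < δ * m := (abs_nonneg _).trans_lt h
  have hs : 2 / 5 * m < s := by nlinarith
  have hdev : δ * m < √(α * s) := (lt_sqrt hδm₀.le).2 (by nlinarith)
  have hsqrt : √(α * s) ≤ 2 * √(α * m) := by
    refine (sqrt_le_left (by positivity)).2 ?_
    have hs' : s ≤ 4 * m := by nlinarith
    rw [mul_pow, sq_sqrt (by positivity)]
    nlinarith
  exact ⟨by linarith, by linarith [sqrt_nonneg (α * m)]⟩

lemma confidenceBounds_iff_div {α m s n : ℝ} (hn : 0 < n) :
    ConfidenceBounds α m s ↔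
      |s / n - m / n| < α / n + √(α * (s / n) / n) ∧
        α / n + √(α * (s / n) / n) < 3 * (α / n + √(α * (m / n) / n)) := by
  have hradius (x : ℝ) : α / n + √(α * (x / n) / n) = (α + √(α * x)) / n := by
    rw [show α * (x / n) / n = α * x / n ^ 2 by ring, sqrt_div' _ (sq_nonneg n),
      sqrt_sq hn.le, add_div]
  rw [hradius, hradius, ← sub_div, abs_div, abs_of_pos hn, div_lt_div_iff_of_pos_right hn,
    mul_div_assoc', div_lt_div_iff_of_pos_right hn]
  rfl

section Chernoff

variable {Ω ι : Type*} [MeasurableSpace Ω] {P : Measure Ω} [IsProbabilityMeasure P]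
  [Fintype ι] {X : ι → Ω → ℝ}

lemma one_sub_measureReal_compl_le (s : Set Ω) : 1 - P.real sᶜ ≤ P.real s := by
  have h := measureReal_union_le (μ := P) s sᶜ
  rw [Set.union_compl_self, probReal_univ] at h
  linarith

lemma mgf_le_exp_integral_mul_of_mem_Icc {Y : Ω → ℝ} (hY : AEMeasurable Y P)
    (hrange : ∀ᵐ ω ∂P, Y ω ∈ Set.Icc (0 : ℝ) 1) (t : ℝ) :
    mgf Y P t ≤ exp (P[Y] * (exp t - 1)) := by
  have hint : Integrable Y P := .of_mem_Icc 0 1 hY hrange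
  calc mgf Y P t ≤ ∫ ω, 1 + Y ω * (exp t - 1) ∂P := by
        refine integral_mono_ae (integrable_exp_mul_of_mem_Icc hY hrange)
          ((integrable_const 1).add (hint.mul_const _)) ?_
        filter_upwards [hrange] with ω hω
        exact exp_mul_le_one_add_mul_exp_sub_one hω.1 hω.2 t
    _ = 1 + P[Y] * (exp t - 1) := by
        rw [integral_add (integrable_const 1) (hint.mul_const _), integral_const,
          integral_mul_const, probReal_univ, one_smul]
    _ ≤ exp (P[Y] * (exp t - 1)) := by linarith [add_one_le_exp (P[Y] * (exp t - 1))]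

namespace ProbabilityTheory.iIndepFun


lemma mgf_sum_le_of_mem_Icc (hindep : iIndepFun X P) (hmeas : ∀ i, Measurable (X i))
    (hrange : ∀ i, ∀ᵐ ω ∂P, X i ω ∈ Set.Icc (0 : ℝ) 1) (t : ℝ) :
    mgf (∑ i, X i) P t ≤ exp ((∑ i, P[X i]) * (exp t - 1)) := by
  rw [hindep.mgf_sum hmeas, Finset.sum_mul, exp_sum]
  exact Finset.prod_le_prod (fun i _ ↦ mgf_nonneg) fun i _ ↦
    mgf_le_exp_integral_mul_of_mem_Icc (hmeas i).aemeasurable (hrange i) t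

lemma integrable_exp_mul_sum_of_mem_Icc (hindep : iIndepFun X P)
    (hmeas : ∀ i, Measurable (X i)) (hrange : ∀ i, ∀ᵐ ω ∂P, X i ω ∈ Set.Icc (0 : ℝ) 1) (t : ℝ) :
    Integrable (fun ω ↦ exp (t * (∑ i, X i) ω)) P :=
  hindep.integrable_exp_mul_sum hmeas fun i _ ↦
    integrable_exp_mul_of_mem_Icc (hmeas i).aemeasurable (hrange i)

lemma measureReal_le_sum_le (hindep : iIndepFun X P) (hmeas : ∀ i, Measurable (X i))
    (hrange : ∀ i, ∀ᵐ ω ∂P, X i ω ∈ Set.Icc (0 : ℝ) 1) {t : ℝ} (ht : 0 ≤ t) (a : ℝ) :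
    P.real {ω | a ≤ ∑ i, X i ω} ≤ exp (-t * a + (∑ i, P[X i]) * (exp t - 1)) := by
  have h := measure_ge_le_exp_mul_mgf a ht
    (hindep.integrable_exp_mul_sum_of_mem_Icc hmeas hrange t)
  simp only [Finset.sum_apply] at h
  rw [exp_add]
  exact h.trans (mul_le_mul_of_nonneg_left
    (hindep.mgf_sum_le_of_mem_Icc hmeas hrange t) (exp_pos _).le)

lemma measureReal_sum_le_le (hindep : iIndepFun X P) (hmeas : ∀ i, Measurable (X i))
    (hrange : ∀ i, ∀ᵐ ω ∂P, X i ω ∈ Set.Icc (0 : ℝ) 1) {t : ℝ} (ht : t ≤ 0) (a : ℝ) :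
    P.real {ω | ∑ i, X i ω ≤ a} ≤ exp (-t * a + (∑ i, P[X i]) * (exp t - 1)) := by
  have h := measure_le_le_exp_mul_mgf a ht
    (hindep.integrable_exp_mul_sum_of_mem_Icc hmeas hrange t)
  simp only [Finset.sum_apply] at h
  rw [exp_add]
  exact h.trans (mul_le_mul_of_nonneg_left
    (hindep.mgf_sum_le_of_mem_Icc hmeas hrange t) (exp_pos _).le)

lemma measureReal_not_confidenceBounds_le_of_mean_le (hindep : iIndepFun X P)
    (hmeas : ∀ i, Measurable (X i)) (hrange : ∀ i, ∀ᵐ ω ∂P, X i ω ∈ Set.Icc (0 : ℝ) 1)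
    {α : ℝ} (hα : 0 < α) (hm : 6 * ∑ i, P[X i] ≤ α) :
    P.real {ω | ¬ConfidenceBounds α (∑ i, P[X i]) (∑ i, X i ω)} ≤ 2 ^ (-α) := by
  set m := ∑ i, P[X i]
  have hm₀ : 0 ≤ m := Finset.sum_nonneg fun i _ ↦
    integral_nonneg_of_ae ((hrange i).mono fun ω hω ↦ hω.1)
  have hsub : {ω | ¬ConfidenceBounds α m (∑ i, X i ω)} ≤ᵐ[P] {ω | α ≤ ∑ i, X i ω} := by
    filter_upwards [ae_all_iff.2 hrange] with ω hω hbad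
    by_contra hlt
    exact hbad (confidenceBounds_of_lt (Finset.sum_nonneg fun i _ ↦ (hω i).1) (not_le.1 hlt)
      hm₀ (by linarith))
  calc P.real _ ≤ P.real {ω | α ≤ ∑ i, X i ω} :=
        ENNReal.toReal_mono (measure_ne_top _ _) (measure_mono_ae hsub)
    _ ≤ exp (-2 * α + m * (exp 2 - 1)) :=
        hindep.measureReal_le_sum_le hmeas hrange zero_le_two α
    _ ≤ exp (-(log 2 * α)) := exp_le_exp.2 (chernoff_exponent_le_neg_log_two_mul hm₀ hm)
    _ = 2 ^ (-α) := by rw [rpow_def_of_pos two_pos, mul_neg]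

lemma measureReal_not_confidenceBounds_le_of_le_mean (hindep : iIndepFun X P)
    (hmeas : ∀ i, Measurable (X i)) (hrange : ∀ i, ∀ᵐ ω ∂P, X i ω ∈ Set.Icc (0 : ℝ) 1)
    {α : ℝ} (hα : 0 < α) (hm : α ≤ 6 * ∑ i, P[X i]) :
    P.real {ω | ¬ConfidenceBounds α (∑ i, P[X i]) (∑ i, X i ω)} ≤ 2 * exp (-α / 72) := by
  set m := ∑ i, P[X i]
  have hm₀ : 0 < m := by linarith
  set δ := √(α / (18 * m))
  -- `δ² m = α/18` makes both tails `exp (-α/72)` while keeping `δ ≤ 3/5`.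
  have hδm : δ ^ 2 * m = α / 18 := by
    rw [sq_sqrt (by positivity)]
    field_simp
  have hδ : δ ≤ 3 / 5 :=
    (sqrt_le_left (by norm_num)).2 (by rw [div_le_iff₀ (by positivity)]; linarith)
  have hsub : {ω | ¬ConfidenceBounds α m (∑ i, X i ω)} ⊆
      {ω | m + 2 * (δ / 2) * m ≤ ∑ i, X i ω} ∪
        {ω | ∑ i, X i ω ≤ m + 2 * (-(δ / 2)) * m} := by
    intro ω hbad
    by_contra hdev
    simp only [Set.mem_union, Set.mem_ofPred_eq, not_or, not_le] at hdev
    exact hbad (confidenceBounds_of_abs_sub_lt hα hm₀.le hδ (by linarith)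
      (abs_sub_lt_iff.2 ⟨by linarith, by linarith⟩))
  have hexponent (t : ℝ) (ht : t ^ 2 = δ ^ 2 / 4) :
      -t * (m + 2 * t * m) + m * (exp t - 1) ≤ -α / 72 := by
    have ht₁ : |t| ≤ 1 := (sq_le_one_iff_abs_le_one t).1 (by nlinarith)
    nlinarith [chernoff_exponent_le ht₁ hm₀.le (2 * t * m)]
  calc P.real _ ≤ P.real ({ω | m + 2 * (δ / 2) * m ≤ ∑ i, X i ω} ∪
          {ω | ∑ i, X i ω ≤ m + 2 * (-(δ / 2)) * m}) := measureReal_mono hsub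
    _ ≤ exp (-α / 72) + exp (-α / 72) := by
        refine (measureReal_union_le _ _).trans (add_le_add ?_ ?_)
        · exact (hindep.measureReal_le_sum_le hmeas hrange (by positivity) _).trans
            (exp_le_exp.2 (hexponent _ (by ring)))
        · exact (hindep.measureReal_sum_le_le hmeas hrange
            (neg_nonpos.2 (by positivity)) _).trans
            (exp_le_exp.2 (hexponent _ (by ring)))
    _ = 2 * exp (-α / 72) := by ring

theorem one_sub_le_measureReal_confidenceBounds (hindep : iIndepFun X P)
    (hmeas : ∀ i, Measurable (X i)) (hrange : ∀ i, ∀ᵐ ω ∂P, X i ω ∈ Set.Icc (0 : ℝ) 1)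
    {α : ℝ} (hα : 0 < α) :
    1 - ((2 : ℝ) ^ (-α) + 2 * exp (-α / 72)) ≤
      P.real {ω | ConfidenceBounds α (∑ i, P[X i]) (∑ i, X i ω)} := by
  have hbad : P.real {ω | ConfidenceBounds α (∑ i, P[X i]) (∑ i, X i ω)}ᶜ ≤
      2 ^ (-α) + 2 * exp (-α / 72) := by
    rw [Set.compl_ofPred]
    rcases le_total (6 * ∑ i, P[X i]) α with hm | hm
    · linarith [hindep.measureReal_not_confidenceBounds_le_of_mean_le hmeas hrange hα hm,
        exp_pos (-α / 72)]
    · linarith [hindep.measureReal_not_confidenceBounds_le_of_le_mean hmeas hrange hα hm,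
        rpow_pos_of_pos two_pos (-α)]
  linarith [one_sub_measureReal_compl_le (P := P)
    {ω | ConfidenceBounds α (∑ i, P[X i]) (∑ i, X i ω)}]

end ProbabilityTheory.iIndepFun

end Chernoff

theorem improved_confidence_radius_general {Ω : Type*} [MeasurableSpace Ω]
    (P : Measure Ω) [IsProbabilityMeasure P] {n : ℕ} (hn : 0 < n)
    (Z : Fin n → Ω → ℝ)
    (hmeas : ∀ i, Measurable (Z i))
    (hindep : iIndepFun Z P)
    (hrange : ∀ i, ∀ᵐ ω ∂P, Z i ω ∈ Set.Icc (0:ℝ) 1)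
    (α : ℝ) (hα : 0 < α) :
    ENNReal.ofReal (1 - ((2:ℝ) ^ (-α) + 2 * Real.exp (-α / 72))) ≤
      P {ω | |(∑ i, Z i ω) / n - ∫ ω', (∑ i, Z i ω') / n ∂P| <
               α / n + Real.sqrt (α * ((∑ i, Z i ω) / n) / n) ∧
             α / n + Real.sqrt (α * ((∑ i, Z i ω) / n) / n) <
               3 * (α / n + Real.sqrt (α * (∫ ω', (∑ i, Z i ω') / n ∂P) / n))} := by
  have hn' : (0 : ℝ) < n := Nat.cast_pos.2 hn
  have hmean : ∫ ω, (∑ i, Z i ω) / n ∂P = (∑ i, P[Z i]) / n := by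
    rw [integral_div, integral_finsetSum _ fun i _ ↦
      Integrable.of_mem_Icc 0 1 (hmeas i).aemeasurable (hrange i)]
  rw [hmean]
  refine ENNReal.ofReal_le_of_le_toReal
    ((hindep.one_sub_le_measureReal_confidenceBounds hmeas hrange hα).trans
      (measureReal_mono fun ω hω ↦ ?_))
  exact (confidenceBounds_iff_div hn').1 hω

/-- Improved confidence-radius concentration bound: for i.i.d. `[0,1]`-valued random
variables with average `Z` and mean `ζ`, with probability at least
`1 − (2^{−α} + 2 e^{−α/72})` we have `|Z − ζ| < r(α, Z) < 3 r(α, ζ)`, where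
`r(α, x) = α/n + sqrt(α x / n)`. -/
theorem improved_confidence_radius {Ω : Type*} [MeasurableSpace Ω]
    (P : Measure Ω) [IsProbabilityMeasure P] {n : ℕ} (hn : 0 < n)
    (Z : Fin n → Ω → ℝ)
    (hmeas : ∀ i, Measurable (Z i))
    (hindep : iIndepFun Z P)
    (hident : ∀ i j, Measure.map (Z i) P = Measure.map (Z j) P)
    (hrange : ∀ i, ∀ᵐ ω ∂P, Z i ω ∈ Set.Icc (0:ℝ) 1)
    (α : ℝ) (hα : 0 < α) :
    ENNReal.ofReal (1 - ((2:ℝ) ^ (-α) + 2 * Real.exp (-α / 72))) ≤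
      P {ω | |(∑ i, Z i ω) / n - ∫ ω', (∑ i, Z i ω') / n ∂P| <
               α / n + Real.sqrt (α * ((∑ i, Z i ω) / n) / n) ∧
             α / n + Real.sqrt (α * ((∑ i, Z i ω) / n) / n) <
               3 * (α / n + Real.sqrt (α * (∫ ω', (∑ i, Z i ω') / n ∂P) / n))} :=
  improved_confidence_radius_general P hn Z hmeas hindep hrange α hα
end

section
/- For real numbers 0 < ε < y < 1, the Kullback–Leibler divergence between Bernoulli distributions with parameters y − ε and y satisfies KL(y − ε; y) < ε² / (y(1 − y)), where KL(a; b) = a·ln(a/b) + (1−a)·ln((1−a)/(1−b)). -/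
open Real

/- Each term of the divergence obeys `p log (p/q) < p (p/q - 1)` by `log x < x - 1`; summed over
the two outcomes the linear parts cancel, leaving the χ² divergence `(a - b)² / (b (1 - b))`. -/

theorem mul_log_div_lt_sq_div_add_sub {p q : ℝ} (hp : 0 < p) (hq : 0 < q) (hpq : p ≠ q) :
    p * log (p / q) < (p - q) ^ 2 / q + (p - q) := by
  have hlog : log (p / q) < p / q - 1 :=
    log_lt_sub_one_of_pos (div_pos hp hq) fun h => hpq ((div_eq_one_iff_eq hq.ne').mp h)
  calc p * log (p / q) < p * (p / q - 1) := mul_lt_mul_of_pos_left hlog hp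
    _ = (p - q) ^ 2 / q + (p - q) := by field_simp; ring

theorem bernoulli_kl_lt_chiSq {a b : ℝ} (ha₀ : 0 < a) (ha₁ : a < 1) (hb₀ : 0 < b) (hb₁ : b < 1)
    (hab : a ≠ b) :
    a * log (a / b) + (1 - a) * log ((1 - a) / (1 - b)) < (a - b) ^ 2 / (b * (1 - b)) := by
  have h₁ := mul_log_div_lt_sq_div_add_sub ha₀ hb₀ hab
  have h₂ := mul_log_div_lt_sq_div_add_sub (sub_pos.2 ha₁) (sub_pos.2 hb₁)
    (fun h => hab (sub_right_injective h))
  have hchi : (a - b) ^ 2 / b + ((1 - a) - (1 - b)) ^ 2 / (1 - b) = (a - b) ^ 2 / (b * (1 - b)) := by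
    field_simp [(sub_pos.2 hb₁).ne']
    ring
  linarith

/-- KL-divergence bound for Bernoulli distributions:
`KL(y − ε; y) < ε² / (y(1 − y))` for `0 < ε < y < 1`. -/
theorem kl_bernoulli_bound (y ε : ℝ) (hε : 0 < ε) (hεy : ε < y) (hy : y < 1) :
    (y - ε) * Real.log ((y - ε) / y) + (1 - (y - ε)) * Real.log ((1 - (y - ε)) / (1 - y)) <
      ε ^ 2 / (y * (1 - y)) := by
  have h := bernoulli_kl_lt_chiSq (a := y - ε) (b := y) (by linarith) (by linarith)
    (hε.trans hεy) hy (by linarith)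
  rwa [sub_sub_cancel_left, neg_sq] at h
end

section
/- Let p and q be two probability measures on a finite sample space Ω, and suppose that for some δ ∈ (0, 1/2], every event E ⊆ Ω satisfies 1 − δ < q(E)/p(E) < 1 + δ (in particular p(x) > 0 for all x). Then the KL-divergence satisfies KL(p; q) < δ². -/
/-! Writing `q = p (1 + t)` pointwise, the hypothesis on singletons gives `|t| < δ ≤ 1/2`, and
there `log (1 + t) ≥ t - t²`. Hence `KL(p; q) ≤ ∑ p (t² - t) = ∑ (q - p)² / p`, the
χ²-divergence, the linear terms cancelling because `p` and `q` have the same mass, and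
`∑ (q - p)² / p < ∑ δ² p = δ²`. -/

open Finset Real

namespace Real

lemma abs_log_one_add_sub_self_le {t : ℝ} (ht : |t| < 1) :
    |log (1 + t) - t| ≤ t ^ 2 * (1 - |t|)⁻¹ / 2 := by
  have hpos : 0 < 1 + t := by linarith [neg_abs_le t]
  have h := Complex.norm_log_one_add_sub_self_le (z := t) (by simpa using ht)
  rw [← Complex.ofReal_one, ← Complex.ofReal_add, ← Complex.ofReal_log hpos.le,
    ← Complex.ofReal_sub, Complex.norm_real, Complex.norm_real, norm_eq_abs,
    norm_eq_abs, sq_abs] at h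
  exact h

lemma sub_sq_le_log_one_add {t : ℝ} (ht : |t| ≤ 1 / 2) : t - t ^ 2 ≤ log (1 + t) := by
  have hlog := abs_log_one_add_sub_self_le (ht.trans_lt (by norm_num))
  have hinv : (1 - |t|)⁻¹ ≤ 2 := by
    rw [inv_le_comm₀ (by linarith) two_pos]
    linarith
  have hquad : t ^ 2 * (1 - |t|)⁻¹ / 2 ≤ t ^ 2 := by
    nlinarith [sq_nonneg t]
  linarith [neg_abs_le (log (1 + t) - t)]

end Real

lemma mul_log_div_le_sq_div_sub {a b : ℝ} (ha : 0 < a) (hab : |b - a| ≤ a / 2) :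
    a * log (a / b) ≤ (b - a) ^ 2 / a - (b - a) := by
  have hb : b / a = 1 + (b - a) / a := by field_simp; ring
  have hlog : (b - a) / a - ((b - a) / a) ^ 2 ≤ log (1 + (b - a) / a) := by
    refine sub_sq_le_log_one_add ?_
    rw [abs_div, abs_of_pos ha, div_le_iff₀ ha]
    linarith
  have hflip : log (a / b) = -log (1 + (b - a) / a) := by rw [← hb, ← log_inv, inv_div]
  calc a * log (a / b) ≤ a * (((b - a) / a) ^ 2 - (b - a) / a) := by
        rw [hflip]; gcongr; linarith
    _ = (b - a) ^ 2 / a - (b - a) := by field_simp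

lemma sum_mul_log_div_le_sum_sq_div {Ω : Type*} [Fintype Ω] {p q : Ω → ℝ}
    (hp : ∀ x, 0 < p x) (hpq : ∀ x, |q x - p x| ≤ p x / 2) (hsum : ∑ x, p x = ∑ x, q x) :
    ∑ x, p x * log (p x / q x) ≤ ∑ x, (q x - p x) ^ 2 / p x := by
  calc ∑ x, p x * log (p x / q x) ≤ ∑ x, ((q x - p x) ^ 2 / p x - (q x - p x)) :=
        sum_le_sum fun x _ => mul_log_div_le_sq_div_sub (hp x) (hpq x)
    _ = ∑ x, (q x - p x) ^ 2 / p x := by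
        rw [sum_sub_distrib, sum_sub_distrib, hsum, sub_self, sub_zero]

theorem kl_from_ratio_bound_general {Ω : Type*} [Fintype Ω] (p q : Ω → ℝ) (δ : ℝ)
    (hδ : δ ≤ 1 / 2)
    (hp : ∀ x, 0 < p x)
    (hp1 : ∑ x, p x = 1) (hq1 : ∑ x, q x = 1)
    (hratio : ∀ E : Finset Ω, E.Nonempty →
      1 - δ < (∑ x ∈ E, q x) / (∑ x ∈ E, p x) ∧
      (∑ x ∈ E, q x) / (∑ x ∈ E, p x) < 1 + δ) :
    ∑ x, p x * Real.log (p x / q x) < δ ^ 2 := by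
  have hclose : ∀ x, |q x - p x| < δ * p x := fun x => by
    obtain ⟨hlo, hhi⟩ := hratio {x} (singleton_nonempty x)
    rw [sum_singleton, sum_singleton, lt_div_iff₀ (hp x)] at hlo
    rw [sum_singleton, sum_singleton, div_lt_iff₀ (hp x)] at hhi
    rw [abs_sub_lt_iff]
    constructor <;> linarith
  have hne : (univ : Finset Ω).Nonempty := by
    by_contra h
    simp [not_nonempty_iff_eq_empty.mp h] at hp1
  calc ∑ x, p x * log (p x / q x) ≤ ∑ x, (q x - p x) ^ 2 / p x :=
        sum_mul_log_div_le_sum_sq_div hp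
          (fun x => (hclose x).le.trans (by nlinarith [hp x])) (hp1.trans hq1.symm)
    _ < ∑ x, δ ^ 2 * p x := sum_lt_sum_of_nonempty hne fun x _ => by
        rw [div_lt_iff₀ (hp x), ← sq_abs]
        nlinarith [abs_nonneg (q x - p x), hclose x, hp x]
    _ = δ ^ 2 := by rw [← mul_sum, hp1, mul_one]

/-- Reverse Pinsker-type inequality: if all events have probability ratio within
`(1 − δ, 1 + δ)`, then `KL(p; q) < δ²`. -/
theorem kl_from_ratio_bound {Ω : Type*} [Fintype Ω] (p q : Ω → ℝ) (δ : ℝ)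
    (hδ0 : 0 < δ) (hδ : δ ≤ 1 / 2)
    (hp : ∀ x, 0 < p x) (hq : ∀ x, 0 ≤ q x)
    (hp1 : ∑ x, p x = 1) (hq1 : ∑ x, q x = 1)
    (hratio : ∀ E : Finset Ω, E.Nonempty →
      1 - δ < (∑ x ∈ E, q x) / (∑ x ∈ E, p x) ∧
      (∑ x ∈ E, q x) / (∑ x ∈ E, p x) < 1 + δ) :
    ∑ x, p x * Real.log (p x / q x) < δ ^ 2 :=
  kl_from_ratio_bound_general p q δ hδ hp hp1 hq1 hratio
end

section
/- Let p and q be two probability measures on a finite sample space Ω with KL-divergence κ = KL(p; q). Then for any event E with p(E) > 0, the probabilities satisfy q(E) ≥ p(E) · exp(−(κ + 1/e)/p(E)). -/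
/-!
Split `κ = KL(p; q)` over `E` and its complement. On `E` the log-sum inequality (data processing
for the indicator of `E`) gives `p(E) log (p(E)/q(E)) ≤ ∑_{x ∈ E} p x log (p x / q x)`, and on the
complement each term is at least `-q x / e` because `t log t ≥ -1/e`. Hence
`p(E) log (p(E)/q(E)) ≤ κ + 1/e`; exponentiate.

Both estimates come from the one termwise inequality `p log c + p - c q ≤ p log (p / q)`, valid for
every `c > 0` (it is `log y ≥ 1 - 1/y` at `y = p / (c q)`): take `c = p(E)/q(E)` on `E` and
`c = 1/e` off `E`.
-/

open Real Finset

lemma mul_log_add_sub_le_mul_log_div {p q c : ℝ} (hp : 0 ≤ p) (hq : 0 ≤ q)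
    (hpq : q = 0 → p = 0) (hc : 0 < c) :
    p * log c + p - c * q ≤ p * log (p / q) := by
  rcases hp.eq_or_lt with rfl | hp
  · simpa using mul_nonneg hc.le hq
  have hq : 0 < q := hq.lt_of_ne fun h => hp.ne' (hpq h.symm)
  have hlog : 1 - (p / (c * q))⁻¹ ≤ log (p / (c * q)) :=
    one_sub_inv_le_log_of_pos (by positivity)
  have hsplit : log (p / q) = log c + log (p / (c * q)) := by
    rw [← log_mul hc.ne' (by positivity)]
    field_simp
  have hinv : p * (p / (c * q))⁻¹ = c * q := by
    field_simp
  rw [hsplit]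
  nlinarith [mul_le_mul_of_nonneg_left hlog hp.le]

section Sums

variable {ι : Type*} {p q : ι → ℝ} (s : Finset ι)

lemma sum_mul_log_add_sub_le_sum_mul_log_div (hp : ∀ x, 0 ≤ p x) (hq : ∀ x, 0 ≤ q x)
    (hpq : ∀ x, q x = 0 → p x = 0) {c : ℝ} (hc : 0 < c) :
    (∑ x ∈ s, p x) * log c + ∑ x ∈ s, p x - c * ∑ x ∈ s, q x
      ≤ ∑ x ∈ s, p x * log (p x / q x) := by
  rw [sum_mul, mul_sum, ← sum_add_distrib, ← sum_sub_distrib]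
  exact sum_le_sum fun x _ => mul_log_add_sub_le_mul_log_div (hp x) (hq x) (hpq x) hc

lemma sum_pos_of_abscont (hq : ∀ x, 0 ≤ q x) (hpq : ∀ x, q x = 0 → p x = 0)
    (hs : 0 < ∑ x ∈ s, p x) : 0 < ∑ x ∈ s, q x := by
  refine (sum_nonneg fun x _ => hq x).lt_of_ne fun h => hs.ne' ?_
  have hq0 := (sum_eq_zero_iff_of_nonneg fun x _ => hq x).mp h.symm
  exact sum_eq_zero fun x hx => hpq x (hq0 x hx)

lemma sum_mul_log_div_sum_le (hp : ∀ x, 0 ≤ p x) (hq : ∀ x, 0 ≤ q x)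
    (hpq : ∀ x, q x = 0 → p x = 0) (hs : 0 < ∑ x ∈ s, p x) :
    (∑ x ∈ s, p x) * log ((∑ x ∈ s, p x) / ∑ x ∈ s, q x)
      ≤ ∑ x ∈ s, p x * log (p x / q x) := by
  have hqs := sum_pos_of_abscont s hq hpq hs
  have := sum_mul_log_add_sub_le_sum_mul_log_div s hp hq hpq (div_pos hs hqs)
  rwa [div_mul_cancel₀ _ hqs.ne', add_sub_cancel_right] at this

lemma neg_sum_div_exp_one_le (hp : ∀ x, 0 ≤ p x) (hq : ∀ x, 0 ≤ q x)
    (hpq : ∀ x, q x = 0 → p x = 0) :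
    -((∑ x ∈ s, q x) / exp 1) ≤ ∑ x ∈ s, p x * log (p x / q x) := by
  have := sum_mul_log_add_sub_le_sum_mul_log_div s hp hq hpq (inv_pos.mpr (exp_pos 1))
  rw [log_inv, log_exp] at this
  linarith [inv_mul_eq_div (exp 1) (∑ x ∈ s, q x)]

end Sums

lemma mul_exp_neg_div_le_of_mul_log_div_le {a b K : ℝ} (ha : 0 < a) (hb : 0 < b)
    (h : a * log (a / b) ≤ K) : a * exp (-K / a) ≤ b := by
  have hlog : -K / a ≤ log (b / a) := by
    rw [div_le_iff₀ ha, ← neg_neg (log (b / a)), ← log_inv, inv_div]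
    linarith
  calc a * exp (-K / a) ≤ a * (b / a) := by
        gcongr
        rwa [← exp_log (div_pos hb ha), exp_le_exp]
    _ = b := mul_div_cancel₀ b ha.ne'

theorem kl_distinguishing_general {Ω : Type*} [Fintype Ω] (p q : Ω → ℝ)
    (hp : ∀ x, 0 ≤ p x) (hq : ∀ x, 0 ≤ q x)
    (hq1 : ∑ x, q x = 1)
    (hac : ∀ x, q x = 0 → p x = 0)
    (E : Finset Ω) (hE : 0 < ∑ x ∈ E, p x) :
    (∑ x ∈ E, p x) *
        Real.exp (-((∑ x, p x * Real.log (p x / q x)) + 1 / Real.exp 1) / (∑ x ∈ E, p x))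
      ≤ ∑ x ∈ E, q x := by
  classical
  have hqE := sum_pos_of_abscont E hq hac hE
  have hqEc : ∑ x ∈ Eᶜ, q x ≤ 1 := by
    rw [← hq1, ← sum_add_sum_compl E]
    linarith
  have hin := sum_mul_log_div_sum_le E hp hq hac hE
  have hout := neg_sum_div_exp_one_le Eᶜ hp hq hac
  have hsplit := sum_add_sum_compl E fun x => p x * log (p x / q x)
  refine mul_exp_neg_div_le_of_mul_log_div_le hE hqE ?_
  have : (∑ x ∈ Eᶜ, q x) / exp 1 ≤ 1 / exp 1 := by gcongr
  linarith

/-- KL-divergence distinguishing lemma: for probability measures `p, q` on a finite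
sample space with `κ = KL(p; q)`, any event `E` with `p(E) > 0` satisfies
`q(E) ≥ p(E) · exp(−(κ + 1/e)/p(E))`. -/
theorem kl_distinguishing {Ω : Type*} [Fintype Ω] (p q : Ω → ℝ)
    (hp : ∀ x, 0 ≤ p x) (hq : ∀ x, 0 ≤ q x)
    (hp1 : ∑ x, p x = 1) (hq1 : ∑ x, q x = 1)
    (hac : ∀ x, q x = 0 → p x = 0)
    (E : Finset Ω) (hE : 0 < ∑ x ∈ E, p x) :
    (∑ x ∈ E, p x) *
        Real.exp (-((∑ x, p x * Real.log (p x / q x)) + 1 / Real.exp 1) / (∑ x ∈ E, p x))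
      ≤ ∑ x ∈ E, q x :=
  kl_distinguishing_general p q hp hq hq1 hac E hE
end

section
/- Let (X, D) be a compact metric space equipped with a well-ordering ≺ such that every initial segment {y ∈ X : y ≺ x} is open in the metric topology. Let μ: X → ℝ be a continuous function attaining maximum value μ* = sup_{x∈X} μ(x). Then there exists a point x* with μ(x*) = μ* such that, writing S(x*) = {y : y ⪯ x*}, we have sup(μ, X \ S(x*)) < μ*, where sup over the empty set is interpreted as −∞. -/
/-- Structural lemma: in a compact metric space with a topological well-ordering,
a continuous function `μ` has an optimal point `x*` such that the supremum of `μ`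
over the complement of the initial segment `S(x*) = {y : y ⪯ x*}` is strictly below
the maximum (where the supremum over the empty set is interpreted as `−∞`, i.e.,
there is a bound `c < μ(x*)` dominating `μ` outside `S(x*)`). -/
theorem structural_lemma_topological_well_ordering {X : Type*} [MetricSpace X]
    [CompactSpace X] [Nonempty X]
    (lt : X → X → Prop) (hwo : IsWellOrder X lt)
    (hopen : ∀ x : X, IsOpen {y : X | lt y x})
    (μ : X → ℝ) (hμ : Continuous μ) :
    ∃ x' : X, (∀ x : X, μ x ≤ μ x') ∧
      ∃ c : ℝ, c < μ x' ∧ ∀ y : X, ¬ (lt y x' ∨ y = x') → μ y ≤ c := by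
  haveI := hwo
  classical
  have htri : ∀ a b : X, lt a b ∨ a = b ∨ lt b a := fun a b => by
    by_contra h; push_neg at h; exact h.2.1 (hwo.trichotomous a b h.1 h.2.2)
  have htrans : ∀ {a b c : X}, lt a b → lt b c → lt a c := fun h1 h2 => IsTrans.trans (r := lt) _ _ _ h1 h2
  have hirr : ∀ a : X, ¬ lt a a := fun a ha => hwo.wf.asymmetric a a ha ha
  -- the set of optimal points
  set M : Set X := {x | ∀ y, μ y ≤ μ x} with hM
  have hMclosed : IsClosed M := by
    have : M = ⋂ y, {x | μ y ≤ μ x} := by ext x; simp [hM]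
    rw [this]
    exact isClosed_iInter fun y => isClosed_le continuous_const hμ
  have hMcompact : IsCompact M := hMclosed.isCompact
  obtain ⟨x0, -, hx0⟩ := isCompact_univ.exists_isMaxOn Set.univ_nonempty hμ.continuousOn
  have hx0M : x0 ∈ M := fun y => hx0 (Set.mem_univ y)
  have hMne : M.Nonempty := ⟨x0, hx0M⟩
  -- M has a lt-greatest element
  have hgreat : ∃ m ∈ M, ∀ z ∈ M, ¬ lt m z := by
    by_contra h
    push_neg at h
    have hcover : M ⊆ ⋃ z : M, {y | lt y z.1} := by
      intro x hx
      obtain ⟨z, hzM, hz⟩ := h x hx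
      exact Set.mem_iUnion.2 ⟨⟨z, hzM⟩, hz⟩
    obtain ⟨t, ht⟩ := hMcompact.elim_finite_subcover (fun z : M => {y | lt y z.1})
      (fun z => hopen z.1) hcover
    -- find a lt-maximal element of t
    have htne : t.Nonempty := by
      rcases hMne with ⟨x, hx⟩
      have := ht hx
      simp only [Set.mem_iUnion] at this
      obtain ⟨z, hz, -⟩ := this
      exact ⟨z, hz⟩
    -- induct to find maximum of finite set w.r.t. lt
    have hmax : ∀ s : Finset X, s.Nonempty → ∃ m ∈ s, ∀ z ∈ s, ¬ lt m z := by
      intro s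
      induction s using Finset.cons_induction with
      | empty => rintro ⟨x, hx⟩; simp at hx
      | cons a s ha ih =>
        intro _
        rcases s.eq_empty_or_nonempty with rfl | hs
        · exact ⟨a, by simp, by intro z hz; simp at hz; subst hz; exact hirr z⟩
        · obtain ⟨m, hm, hmmax⟩ := ih hs
          rcases htri a m with h1 | h1 | h1
          · refine ⟨m, Finset.mem_cons_of_mem hm, ?_⟩
            intro z hz
            rcases Finset.mem_cons.1 hz with rfl | hz
            · intro hh; exact hirr _ (htrans hh h1)
            · exact hmmax z hz
          · subst h1
            exact ⟨a, Finset.mem_cons_self a s, fun z hz =>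
              hmmax z (by rcases Finset.mem_cons.1 hz with rfl | hz; exact hm; exact hz)⟩
          · refine ⟨a, Finset.mem_cons_self a s, ?_⟩
            intro z hz
            rcases Finset.mem_cons.1 hz with rfl | hz
            · exact hirr z
            · intro hh; exact hmmax z hz (htrans h1 hh)
    obtain ⟨m, hmt, hmmax⟩ := hmax (t.image Subtype.val)
      (htne.image Subtype.val)
    obtain ⟨zm, hzmt, hzm⟩ := Finset.mem_image.1 hmt
    have hmM : m ∈ M := hzm ▸ zm.2
    have := ht hmM
    simp only [Set.mem_iUnion] at this
    obtain ⟨z, hzt, hltz⟩ := this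
    exact hmmax z.1 (Finset.mem_image.2 ⟨z, hzt, rfl⟩) hltz
  obtain ⟨m, hmM, hmgreat⟩ := hgreat
  refine ⟨m, hmM, ?_⟩
  -- the tail K = {y | lt m y}
  set K : Set X := {y | lt m y} with hK
  rcases K.eq_empty_or_nonempty with hKe | hKne
  · refine ⟨μ m - 1, by linarith, ?_⟩
    intro y hy
    exfalso
    rcases htri y m with h1 | h1 | h1
    · exact hy (Or.inl h1)
    · exact hy (Or.inr h1)
    · exact Set.eq_empty_iff_forall_notMem.1 hKe y h1
  · -- successor of m : least element of K
    set s : X := hwo.wf.min K hKne with hs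
    have hms : lt m s := hwo.wf.min_mem K hKne
    have hsmin : ∀ y ∈ K, ¬ lt y s := fun y hy => hwo.wf.not_lt_min K hy
    -- complement of K equals the initial segment of s
    have hKc : Kᶜ = {y | lt y s} := by
      ext y
      simp only [Set.mem_compl_iff, hK, Set.mem_setOf_eq]
      constructor
      · intro hy
        rcases htri y m with h1 | h1 | h1
        · exact htrans h1 hms
        · exact h1 ▸ hms
        · exact absurd h1 hy
      · intro hy hmy
        exact hsmin y hmy hy
    have hKclosed : IsClosed K := by
      rw [← compl_compl K, hKc]
      exact (hopen s).isClosed_compl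
    obtain ⟨y0, hy0K, hy0max⟩ := hKclosed.isCompact.exists_isMaxOn hKne hμ.continuousOn
    refine ⟨μ y0, ?_, ?_⟩
    · -- μ y0 < μ m since y0 is not optimal
      by_contra h
      push_neg at h
      have hy0M : y0 ∈ M := fun z => le_trans (hmM z) h
      exact hmgreat y0 hy0M hy0K
    · intro y hy
      have hmy : lt m y := by
        rcases htri y m with h1 | h1 | h1
        · exact absurd (Or.inl h1) hy
        · exact absurd (Or.inr h1) hy
        · exact h1
      exact hy0max hmy
end

section
/- A metric space (X, D) admits a topological well-ordering if and only if no subspace of (X, D) is perfect (i.e., every nonempty subset Y ⊆ X has at least one point that is isolated in the subspace topology of Y). -/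
/-!
If the initial segments of a well-order are open, the least element of any nonempty set is
isolated in it, because `{z | ¬ y < z}` is the open initial segment below the successor of `y`.

Conversely, iterate the Cantor–Bendixson derivative (removing isolated points) transfinitely.
The stages decrease, so they stabilise at a set without isolated points, which must be empty.
Ordering points first by the stage at which they disappear, then by an arbitrary well-order,
gives a well-order whose initial segments are open: a point `y` removed at stage `α + 1` has a
neighbourhood meeting stage `α` only in `y`, so all other points near `y` disappear earlier.
-/

open Set Filter Topology

universe u

theorem Metric.not_accPt_principal_iff {X : Type*} [PseudoMetricSpace X] {x : X} {s : Set X} :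
    ¬AccPt x (𝓟 s) ↔ ∃ ε : ℝ, 0 < ε ∧ ∀ z ∈ s, dist x z < ε → z = x := by
  rw [accPt_iff_frequently_nhdsNE, not_frequently, eventually_nhdsWithin_iff,
    Metric.eventually_nhds_iff]
  refine exists_congr fun ε => and_congr_right fun _ => forall_congr' fun z => ?_
  rw [dist_comm]
  grind

section WellOrder

variable {X : Type*} [TopologicalSpace X]

theorem exists_not_accPt_of_isWellOrder {r : X → X → Prop} [IsWellOrder X r]
    (hr : ∀ x, IsOpen {y | r y x}) {Y : Set X} (hY : Y.Nonempty) :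
    ∃ y ∈ Y, ¬AccPt y (𝓟 Y) := by
  have hwf : WellFounded r := IsWellFounded.wf
  obtain ⟨y, hyY, hmin⟩ := hwf.has_min Y hY
  have hopen : IsOpen {z | ¬r y z} := by
    by_cases hsucc : ∃ w, r y w
    · obtain ⟨w, hyw, hwmin⟩ := hwf.has_min {w | r y w} hsucc
      convert hr w using 1
      ext z
      refine ⟨fun hz => ?_, fun hzw hyz => hwmin z hyz hzw⟩
      rcases trichotomous_of r z y with hzy | rfl | hyz
      · exact _root_.trans hzy hyw
      · exact hyw
      · exact absurd hyz hz
    · simp [not_exists.1 hsucc]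
  refine ⟨y, hyY, fun hacc => ?_⟩
  obtain ⟨z, ⟨hzU, hzY⟩, hzy⟩ := accPt_iff_nhds.1 hacc _ (hopen.mem_nhds (irrefl y))
  exact hzy (((trichotomous_of r z y).resolve_left (hmin z hzY)).resolve_right hzU)

end WellOrder

section Rank

variable {X : Type*} [TopologicalSpace X] {α : Type*} [LinearOrder α]

def rankLex (ρ : X → α) : X → X → Prop :=
  InvImage (Prod.Lex (· < ·) WellOrderingRel) fun x => (ρ x, x)

instance [WellFoundedLT α] (ρ : X → α) : IsWellOrder X (rankLex ρ) :=
  (RelEmbedding.mk ⟨fun x => (ρ x, x), fun _ _ h => congrArg Prod.snd h⟩ Iff.rfl :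
    rankLex ρ ↪r Prod.Lex (· < ·) WellOrderingRel).isWellOrder

theorem isOpen_setOf_rankLex {ρ : X → α} (hρ : ∀ x, ∀ᶠ z in 𝓝[≠] x, ρ z < ρ x) (x : X) :
    IsOpen {y | rankLex ρ y x} := by
  refine isOpen_iff_mem_nhds.2 fun y hy => ?_
  have hρy : ρ y ≤ ρ x := by
    rcases Prod.lex_def.1 hy with h | h
    exacts [h.le, h.1.le]
  filter_upwards [eventually_nhdsWithin_iff.1 (hρ y)] with z hz
  rcases eq_or_ne z y with rfl | hzy
  · exact hy
  · exact Prod.Lex.left _ _ ((hz hzy).trans_le hρy)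

end Rank

section CantorBendixson

variable (X : Type u) [TopologicalSpace X]

noncomputable def cantorBendixson (α : Ordinal.{u}) : Set X :=
  ⋂ β : Iio α, relDerivedSet (cantorBendixson β)
termination_by α
decreasing_by exact β.2

variable {X}

theorem cantorBendixson_subset_relDerivedSet {α β : Ordinal.{u}} (h : β < α) :
    cantorBendixson X α ⊆ relDerivedSet (cantorBendixson X β) := by
  rw [cantorBendixson]
  exact iInter_subset (fun β : Iio α => relDerivedSet (cantorBendixson X β)) ⟨β, h⟩

theorem cantorBendixson_antitone : Antitone (cantorBendixson X) := fun _ _ h =>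
  h.eq_or_lt.elim (fun h => h ▸ le_rfl) fun h =>
    (cantorBendixson_subset_relDerivedSet h).trans relDerivedSet_subset

theorem cantorBendixson_succ (α : Ordinal.{u}) :
    cantorBendixson X (Order.succ α) = relDerivedSet (cantorBendixson X α) := by
  refine (cantorBendixson_subset_relDerivedSet (Order.lt_succ α)).antisymm ?_
  rw [cantorBendixson.eq_1 X (Order.succ α)]
  exact subset_iInter fun β =>
    relDerivedSet.monotone (cantorBendixson_antitone (Order.lt_succ_iff.1 β.2))

theorem exists_preperfect_cantorBendixson : ∃ α, Preperfect (cantorBendixson X α) := by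
  by_contra! h
  have hanti : StrictAnti (cantorBendixson X) := fun β α hβα =>
    calc cantorBendixson X α ⊆ cantorBendixson X (Order.succ β) :=
          cantorBendixson_antitone (Order.succ_le_of_lt hβα)
      _ ⊂ cantorBendixson X β := by
          rw [cantorBendixson_succ]
          exact relDerivedSet_subset.ssubset_of_not_subset fun hsub => h β fun x hx => (hsub hx).1
  exact not_injective_of_ordinal _ hanti.injective

theorem exists_cantorBendixson_eq_empty
    (h : ∀ Y : Set X, Y.Nonempty → ∃ y ∈ Y, ¬AccPt y (𝓟 Y)) :
    ∃ α, cantorBendixson X α = ∅ := by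
  obtain ⟨α, hα⟩ := exists_preperfect_cantorBendixson (X := X)
  refine ⟨α, not_nonempty_iff_eq_empty.1 fun hne => ?_⟩
  obtain ⟨y, hy, hacc⟩ := h _ hne
  exact hacc (hα y hy)

noncomputable def cantorBendixsonRank (x : X) : Ordinal.{u} :=
  sInf {α | x ∉ cantorBendixson X α}

theorem eventually_cantorBendixsonRank_lt
    (h : ∀ Y : Set X, Y.Nonempty → ∃ y ∈ Y, ¬AccPt y (𝓟 Y)) (x : X) :
    ∀ᶠ z in 𝓝[≠] x, cantorBendixsonRank z < cantorBendixsonRank x := by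
  obtain ⟨α, hα⟩ := exists_cantorBendixson_eq_empty h
  have hx : x ∉ cantorBendixson X (cantorBendixsonRank x) :=
    csInf_mem (s := {α | x ∉ cantorBendixson X α}) ⟨α, by simp [hα]⟩
  rw [cantorBendixson, mem_iInter] at hx
  push Not at hx
  obtain ⟨⟨β, hβ⟩, hxβ⟩ := hx
  have hmem : x ∈ cantorBendixson X β := by
    by_contra hnot
    exact notMem_of_lt_csInf (s := {α | x ∉ cantorBendixson X α}) hβ (OrderBot.bddBelow _) hnot
  have hiso : ¬AccPt x (𝓟 (cantorBendixson X β)) := fun hacc => hxβ ⟨hacc, hmem⟩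
  rw [accPt_iff_frequently_nhdsNE, not_frequently] at hiso
  filter_upwards [hiso] with z hz
  exact (csInf_le' hz).trans_lt hβ

end CantorBendixson

/-- A metric space admits a topological well-ordering if and only if no subspace is
perfect, i.e., every nonempty subset has a point that is isolated in its subspace
topology. -/
theorem topological_well_ordering_iff_no_perfect_subspace {X : Type*} [MetricSpace X] :
    (∃ lt : X → X → Prop, IsWellOrder X lt ∧ ∀ x : X, IsOpen {y : X | lt y x}) ↔
    (∀ Y : Set X, Y.Nonempty →
      ∃ y ∈ Y, ∃ ε : ℝ, 0 < ε ∧ ∀ z ∈ Y, dist y z < ε → z = y) := by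
  simp only [← Metric.not_accPt_principal_iff]
  constructor
  · rintro ⟨r, _, hopen⟩ Y hY
    exact exists_not_accPt_of_isWellOrder hopen hY
  · intro h
    exact ⟨_, inferInstance, isOpen_setOf_rankLex (eventually_cantorBendixsonRank_lt h)⟩
end

section
/- If a metric space (X, D) admits a topological well-ordering ≺ and (X, D) is compact, then X is countable. -/
/-!
Let `U x = {y | ¬ x ≺ y}`. It is open: if `x` has a successor `s` then `U x = {y | y ≺ s}`,
and otherwise `U x` is everything. Let `S n` be the set of points `x` whose ball of radius
`1/(n+1)` lies in `U x`. Two distinct points of `S n` are comparable, so the smaller one lies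
outside the ball around the larger one: `S n` is `1/(n+1)`-separated, hence finite by compactness.
Every point lies in some `S n`, so `X` is countable.
-/

open Metric

theorem Set.finite_of_pairwise_le_dist {X : Type*} [MetricSpace X] [CompactSpace X] {s : Set X}
    {ε : ℝ} (hε : 0 < ε) (hs : s.Pairwise fun x y => ε ≤ dist x y) : s.Finite := by
  have : CompactSpace s :=
    isCompact_iff_compactSpace.mp (isClosed_of_pairwise_le_dist hε hs).isCompact
  have : DiscreteTopology s :=
    .of_forall_le_dist hε fun x y hxy => hs x.2 y.2 (Subtype.coe_ne_coe.mpr hxy)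
  exact Set.finite_coe_iff.mp finite_of_compact_of_discrete

theorem isOpen_setOf_not_lt_of_isOpen_setOf_lt {X : Type*} [TopologicalSpace X]
    {r : X → X → Prop} [IsWellOrder X r] (hopen : ∀ x, IsOpen {y | r y x}) (x : X) :
    IsOpen {y | ¬ r x y} := by
  by_cases hsucc : ∃ y, r x y
  · obtain ⟨s, hxs, hmin⟩ := (IsWellFounded.wf : WellFounded r).has_min {y | r x y} hsucc
    convert hopen s using 1
    ext y
    refine ⟨fun hy => ?_, fun hys hxy => hmin y hxy hys⟩
    rcases trichotomous_of r y x with hyx | rfl | hxy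
    · exact _root_.trans hyx hxs
    · exact hxs
    · exact absurd hxy hy
  · convert isOpen_univ
    exact Set.eq_univ_of_forall fun y hxy => hsucc ⟨y, hxy⟩

theorem countable_of_isOpen_setOf_not_lt {X : Type*} [MetricSpace X] [CompactSpace X]
    {r : X → X → Prop} [Std.Trichotomous r] [Std.Irrefl r]
    (hopen : ∀ x, IsOpen {y | ¬ r x y}) :
    Countable X := by
  set S : ℕ → Set X := fun n => {x | ball x (1 / (n + 1)) ⊆ {y | ¬ r x y}}
  have hsep (n : ℕ) : (S n).Pairwise fun x z => 1 / (n + 1) ≤ dist x z := by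
    intro x hx z hz hne
    by_contra! hlt
    rcases trichotomous_of r x z with hxz | rfl | hzx
    · exact hx (mem_ball'.mpr hlt) hxz
    · exact hne rfl
    · exact hz (mem_ball.mpr hlt) hzx
  have hcover : ⋃ n, S n = Set.univ := by
    refine Set.eq_univ_of_forall fun x => Set.mem_iUnion.mpr ?_
    obtain ⟨ε, hε, hball⟩ := isOpen_iff.mp (hopen x) x (irrefl x)
    obtain ⟨n, hn⟩ := exists_nat_one_div_lt hε
    exact ⟨n, (ball_subset_ball hn.le).trans hball⟩
  rw [← Set.countable_univ_iff, ← hcover]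
  exact Set.countable_iUnion fun n =>
    (Set.finite_of_pairwise_le_dist (by positivity) (hsep n)).countable

/-- If a compact metric space admits a topological well-ordering, then it is countable. -/
theorem countable_of_compact_topological_well_ordering {X : Type*} [MetricSpace X]
    [CompactSpace X]
    (lt : X → X → Prop) (hwo : IsWellOrder X lt)
    (hopen : ∀ x : X, IsOpen {y : X | lt y x}) :
    Countable X := by
  have := hwo
  exact countable_of_isOpen_setOf_not_lt (isOpen_setOf_not_lt_of_isOpen_setOf_lt hopen)
end

section
/- Let (X, D) be a metric space, and let S ⊆ X be a set of cardinality 2n whose points are pairwise at distance at least ε > 0. Let P_X denote the space of finitely supported probability measures on X with the Wasserstein-1 (earthmover) distance W₁. Then there exists a map f from the Hamming cube {0,1}^n to P_X such that for all a, b ∈ {0,1}^n, W₁(f(a), f(b)) ≥ (ε/n) · H(a, b), where H is the Hamming distance. -/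
/-!
Pair the `2n` points of `S` as `t (i, false), t (i, true)` and send `a` to the uniform measure on
the points `t (i, a i)`. If `a` and `b` differ in `k` coordinates, `f a` puts mass `k / n` on the
points `t (i, a i)` with `a i ≠ b i`, where `f b` puts none. Any coupling must carry this mass to
other points of `S`, each at distance at least `ε`, so it costs at least `ε k / n`.
-/

open MeasureTheory ENNReal Function

section Coupling

variable {α : Type*} [MeasurableSpace α]

theorem integrable_of_ae_mem_finite [MeasurableSingletonClass α] {μ : Measure α}
    [IsFiniteMeasure μ] {T : Set α} (hT : T.Finite) (hμT : ∀ᵐ x ∂μ, x ∈ T) (f : α → ℝ) :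
    Integrable f μ :=
  Measure.restrict_eq_self_of_ae_mem hμT ▸ IntegrableOn.of_finite hT

theorem mul_measureReal_le_integral_of_map_snd_eq_zero {γ : Measure (α × α)} [IsFiniteMeasure γ]
    {c : α × α → ℝ} (hc : Integrable c γ) (hc_nonneg : 0 ≤ᵐ[γ] c) {A : Set α}
    (hA : MeasurableSet A) (hA_snd : γ.map Prod.snd A = 0) {ε : ℝ}
    (hcost : ∀ᵐ p ∂γ, p.1 ∈ A → p.2 ∉ A → ε ≤ c p) :
    ε * (γ.map Prod.fst).real A ≤ ∫ p, c p ∂γ := by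
  set E := Prod.fst ⁻¹' A \ Prod.snd ⁻¹' A
  have hE : MeasurableSet E := (measurable_fst hA).diff (measurable_snd hA)
  have hγE : (γ.map Prod.fst).real A = γ.real E := by
    rw [measureReal_def, measureReal_def, Measure.map_apply measurable_fst hA,
      measure_sdiff_null (by rwa [← Measure.map_apply measurable_snd hA])]
  calc ε * (γ.map Prod.fst).real A = ∫ _ in E, ε ∂γ := by
        rw [hγE, setIntegral_const, smul_eq_mul, mul_comm]
    _ ≤ ∫ p in E, c p ∂γ := by
        refine integral_mono_ae (integrable_const ε) hc.integrableOn ?_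
        refine (ae_restrict_iff' hE).mpr ?_
        filter_upwards [hcost] with p hp hpE using hp hpE.1 hpE.2
    _ ≤ ∫ p, c p ∂γ := setIntegral_le_integral hc hc_nonneg

end Coupling

section CubeMeasure

variable {X ι : Type*} [MeasurableSpace X] [Fintype ι]

noncomputable def cubeMeasure (t : ι × Bool → X) (a : ι → Bool) : Measure X :=
  (Fintype.card ι : ℝ≥0∞)⁻¹ • ∑ i, Measure.dirac (t (i, a i))

def movedPoints (t : ι × Bool → X) (a b : ι → Bool) : Set X :=
  t '' {p | p.2 = a p.1 ∧ a p.1 ≠ b p.1}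

variable [MeasurableSingletonClass X] (t : ι × Bool → X) (a : ι → Bool)

open Classical in
theorem cubeMeasure_apply (s : Set X) :
    cubeMeasure t a s = (Finset.univ.filter fun i => t (i, a i) ∈ s).card / Fintype.card ι := by
  simp [cubeMeasure, Measure.dirac_apply, Set.indicator_apply, Finset.sum_boole,
    ENNReal.div_eq_inv_mul]

theorem isProbabilityMeasure_cubeMeasure [Nonempty ι] : IsProbabilityMeasure (cubeMeasure t a) :=
  ⟨by simp [cubeMeasure_apply, ENNReal.div_self]⟩

theorem cubeMeasure_compl_eq_zero {S : Set X} (ht : ∀ p, t p ∈ S) : cubeMeasure t a Sᶜ = 0 := by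
  simp [cubeMeasure_apply, ht]

variable {t}

theorem cubeMeasure_movedPoints (ht : Injective t) (b : ι → Bool) :
    cubeMeasure t a (movedPoints t a b) = hammingDist a b / Fintype.card ι := by
  classical
  simp [cubeMeasure_apply, movedPoints, ht.mem_set_image, hammingDist]

theorem cubeMeasure_movedPoints_right (ht : Injective t) (b : ι → Bool) :
    cubeMeasure t b (movedPoints t a b) = 0 := by
  classical
  simp +contextual [cubeMeasure_apply, movedPoints, ht.mem_set_image]

end CubeMeasure

theorem hamming_embeds_into_wasserstein_general {X : Type*} [MetricSpace X]
    [MeasurableSpace X] [BorelSpace X]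
    (n : ℕ) (hn : 0 < n) (ε : ℝ)
    (S : Finset X) (hcard : S.card = 2 * n)
    (hsep : ∀ x ∈ S, ∀ y ∈ S, x ≠ y → ε ≤ dist x y) :
    ∃ f : (Fin n → Bool) → Measure X,
      (∀ a, IsProbabilityMeasure (f a)) ∧
      (∀ a, f a ((S : Set X)ᶜ) = 0) ∧
      ∀ a b : Fin n → Bool, ∀ γ : Measure (X × X), IsProbabilityMeasure γ →
        γ.map Prod.fst = f a → γ.map Prod.snd = f b →
        (ε / n) * (hammingDist a b : ℝ) ≤ ∫ p : X × X, dist p.1 p.2 ∂γ := by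
  obtain ⟨t, ht_inj, ht_mem⟩ : ∃ t : Fin n × Bool → X, Injective t ∧ ∀ p, t p ∈ S := by
    let e : Fin n × Bool ≃ S := Fintype.equivOfCardEq (by simp [hcard, mul_comm])
    exact ⟨(↑) ∘ e, Subtype.val_injective.comp e.injective, fun p => (e p).2⟩
  have : Nonempty (Fin n) := ⟨⟨0, hn⟩⟩
  refine ⟨cubeMeasure t, fun a => isProbabilityMeasure_cubeMeasure t a,
    fun a => cubeMeasure_compl_eq_zero t a ht_mem, fun a b γ _ hfst hsnd => ?_⟩
  have hS_ae : ∀ᵐ p ∂γ, p.1 ∈ S ∧ p.2 ∈ S := by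
    have h1 := ae_of_ae_map measurable_fst.aemeasurable
      (hfst ▸ mem_ae_iff.mpr (cubeMeasure_compl_eq_zero t a ht_mem))
    have h2 := ae_of_ae_map measurable_snd.aemeasurable
      (hsnd ▸ mem_ae_iff.mpr (cubeMeasure_compl_eq_zero t b ht_mem))
    filter_upwards [h1, h2] with p hp1 hp2 using ⟨hp1, hp2⟩
  have hmoved_sub : movedPoints t a b ⊆ S := Set.image_subset_iff.mpr fun p _ => ht_mem p
  have hcost : ∀ᵐ p ∂γ, p.1 ∈ movedPoints t a b → p.2 ∉ movedPoints t a b →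
      ε ≤ dist p.1 p.2 := by
    filter_upwards [hS_ae] with p hp hp1 hp2
    exact hsep _ (hmoved_sub hp1) _ hp.2 (ne_of_mem_of_not_mem hp1 hp2)
  have key := mul_measureReal_le_integral_of_map_snd_eq_zero
    (integrable_of_ae_mem_finite (S.finite_toSet.prod S.finite_toSet) hS_ae _)
    (.of_forall fun _ => dist_nonneg) (S.finite_toSet.subset hmoved_sub).measurableSet
    (hsnd ▸ cubeMeasure_movedPoints_right a ht_inj b) hcost
  rwa [hfst, measureReal_def, cubeMeasure_movedPoints a ht_inj, ENNReal.toReal_div,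
    ENNReal.toReal_natCast, ENNReal.toReal_natCast, Fintype.card_fin, ← mul_div_assoc,
    mul_div_right_comm] at key

/-- Embedding of the Hamming cube into the Wasserstein space: if `S ⊆ X` has `2n` points
pairwise at distance at least `ε`, there is a map `f` from `{0,1}ⁿ` to (finitely supported)
probability measures on `X` such that `W₁(f(a), f(b)) ≥ (ε/n)·H(a,b)`; equivalently,
every coupling of `f(a)` and `f(b)` has transportation cost at least `(ε/n)·H(a,b)`. -/
theorem hamming_embeds_into_wasserstein {X : Type*} [MetricSpace X]
    [MeasurableSpace X] [BorelSpace X]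
    (n : ℕ) (hn : 0 < n) (ε : ℝ) (hε : 0 < ε)
    (S : Finset X) (hcard : S.card = 2 * n)
    (hsep : ∀ x ∈ S, ∀ y ∈ S, x ≠ y → ε ≤ dist x y) :
    ∃ f : (Fin n → Bool) → Measure X,
      (∀ a, IsProbabilityMeasure (f a)) ∧
      (∀ a, f a ((S : Set X)ᶜ) = 0) ∧
      ∀ a b : Fin n → Bool, ∀ γ : Measure (X × X), IsProbabilityMeasure γ →
        γ.map Prod.fst = f a → γ.map Prod.snd = f b →
        (ε / n) * (hammingDist a b : ℝ) ≤ ∫ p : X × X, dist p.1 p.2 ∂γ :=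
  hamming_embeds_into_wasserstein_general n hn ε S hcard hsep
end
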